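/- arXiv:1805.03625 — 4 statements merged into one kernel-verified Lean document; each statement's English description precedes it below -/
import Mathlib

section
/- If a real matrix A is totally unimodular, then for every field F, the matrix obtained by interpreting the entries of A (all of which lie in {0,1,-1}) as elements of F represents a matroid on the column index set that is independent of the choice of F; in particular, a set of columns of A is linearly independent over the rationals if and only if the corresponding set of columns is linearly independent over F. -/
/-!
A family of columns of a matrix over a field is linearly independent iff some square minor on
those columns is nonzero. If the matrix comes from a totally unimodular integer matrix, each such
minor is the image of `0`, `1` or `-1`, and the images of `±1` never vanish in a field; so the
independence of a set of columns does not depend on the field.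
-/

open scoped Classical

/-- A real matrix is totally unimodular if every square submatrix
(chosen via injective row and column selections) has determinant `0`, `1`, or `-1`. -/
def IsTotUnimodular {m n : Type*} (A : Matrix m n ℝ) : Prop :=
  ∀ (k : ℕ) (f : Fin k → m) (g : Fin k → n), Function.Injective f → Function.Injective g →
    (A.submatrix f g).det = 0 ∨ (A.submatrix f g).det = 1 ∨ (A.submatrix f g).det = -1

/-- Reinterpret a real number lying in `{0, 1, -1}` as an element of another ring,
mapping `0 ↦ 0`, `1 ↦ 1`, `-1 ↦ -1`. -/
noncomputable def reinterpret (R : Type*) [Ring R] (x : ℝ) : R :=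
  if x = 1 then 1 else if x = -1 then -1 else 0

theorem map_eq_zero_iff_of_mem_range_signTypeCast {R S : Type*} [Ring R] [Ring S] [Nontrivial S]
    (φ : R →+* S) {x : R} (hx : x ∈ Set.range SignType.cast) : φ x = 0 ↔ x = 0 := by
  have := φ.domain_nontrivial
  obtain ⟨σ, rfl⟩ := hx
  rw [SignType.map_cast]
  cases σ <;> simp

namespace Matrix

variable {m n K : Type*} [Field K] {M : Matrix m n K}

theorem span_row_eq_top_of_linearIndependent_col [Fintype m] [Fintype n]
    (h : LinearIndependent K M.col) : Submodule.span K (Set.range M.row) = ⊤ := by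
  apply Submodule.eq_top_of_finrank_eq
  rw [← rank_eq_finrank_span_row, ← rank_transpose, LinearIndependent.rank_matrix (M := Mᵀ) h,
    Module.finrank_fintype_fun_eq_card]

theorem exists_det_submatrix_ne_zero_of_linearIndependent_col [Fintype m] [Fintype n]
    [DecidableEq n] (h : LinearIndependent K M.col) :
    ∃ f : n → m, (M.submatrix f id).det ≠ 0 := by
  obtain ⟨κ, a, ha, hspan, hli⟩ := exists_linearIndependent' K M.row
  rw [span_row_eq_top_of_linearIndependent_col h] at hspan
  have := Fintype.ofInjective a ha
  have hcard : Fintype.card κ = Fintype.card n := by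
    rw [linearIndependent_iff_card_eq_finrank_span.mp hli, Set.finrank, hspan, finrank_top,
      Module.finrank_fintype_fun_eq_card]
  let e : n ≃ κ := (Fintype.equivOfCardEq hcard).symm
  refine ⟨a ∘ e, ?_⟩
  rw [← isUnit_iff_ne_zero, ← isUnit_iff_isUnit_det, ← linearIndependent_rows_iff_isUnit]
  exact hli.comp e e.injective

theorem linearIndependent_col_of_det_submatrix_ne_zero [Fintype n] [DecidableEq n] {f : n → m}
    (hf : (M.submatrix f id).det ≠ 0) : LinearIndependent K M.col :=
  have hsub : LinearIndependent K (M.submatrix f id).col :=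
    linearIndependent_cols_iff_isUnit.mpr ((isUnit_iff_isUnit_det _).mpr hf.isUnit)
  hsub.of_comp (LinearMap.funLeft K K f)

theorem linearIndependent_col_iff_exists_det_submatrix_ne_zero [Fintype m] [Fintype n]
    [DecidableEq n] : LinearIndependent K M.col ↔ ∃ f : n → m, (M.submatrix f id).det ≠ 0 :=
  ⟨exists_det_submatrix_ne_zero_of_linearIndependent_col,
    fun ⟨_, hf⟩ => linearIndependent_col_of_det_submatrix_ne_zero hf⟩

variable {R S : Type*} [CommRing R] [CommRing S]

theorem IsTotallyUnimodular.of_map {B : Matrix m n R} {φ : R →+* S} (hφ : Function.Injective φ)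
    (hB : (B.map φ).IsTotallyUnimodular) : B.IsTotallyUnimodular := by
  intro k f g hf hg
  obtain ⟨σ, hσ⟩ := hB k f g hf hg
  refine ⟨σ, hφ ?_⟩
  rw [SignType.map_cast, hσ, RingHom.map_det, submatrix_map]
  rfl

theorem IsTotallyUnimodular.linearIndependent_col_map_iff [Fintype m] [Fintype n] [DecidableEq n]
    {B : Matrix m n R} (hB : B.IsTotallyUnimodular) (φ : R →+* K) :
    LinearIndependent K (B.map φ).col ↔ ∃ f : n → m, (B.submatrix f id).det ≠ 0 := by
  rw [linearIndependent_col_iff_exists_det_submatrix_ne_zero]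
  refine exists_congr fun f => not_congr ?_
  rw [submatrix_map, ← RingHom.mapMatrix_apply, ← RingHom.map_det]
  exact map_eq_zero_iff_of_mem_range_signTypeCast φ
    ((isTotallyUnimodular_iff_fintype _).mp hB n f id)

end Matrix

theorem intCast_reinterpret (R : Type*) [Ring R] (x : ℝ) :
    ((reinterpret ℤ x : ℤ) : R) = reinterpret R x := by
  unfold reinterpret
  split_ifs <;> simp

theorem reinterpret_of_mem_range_signTypeCast {x : ℝ} (hx : x ∈ Set.range SignType.cast) :
    reinterpret ℝ x = x := by
  obtain ⟨σ, rfl⟩ := hx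
  cases σ <;> norm_num [reinterpret]

theorem IsTotUnimodular.isTotallyUnimodular {m n : Type*} {A : Matrix m n ℝ}
    (hA : IsTotUnimodular A) : A.IsTotallyUnimodular := by
  intro k f g hf hg
  rcases hA k f g hf hg with h | h | h
  exacts [⟨0, h.symm⟩, ⟨1, h.symm⟩, ⟨-1, by simp [h]⟩]

theorem IsTotUnimodular.isTotallyUnimodular_map_reinterpret_int {m n : Type*}
    {A : Matrix m n ℝ} (hA : IsTotUnimodular A) :
    (A.map (reinterpret ℤ)).IsTotallyUnimodular := by
  refine Matrix.IsTotallyUnimodular.of_map (φ := Int.castRingHom ℝ) Int.cast_injective ?_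
  convert hA.isTotallyUnimodular
  ext i j
  simp [intCast_reinterpret,
    reinterpret_of_mem_range_signTypeCast (hA.isTotallyUnimodular.apply i j)]

theorem linearIndependent_col_map_reinterpret_iff {m n : Type*} [Fintype m] [Fintype n]
    [DecidableEq n] {A : Matrix m n ℝ} (hA : (A.map (reinterpret ℤ)).IsTotallyUnimodular)
    (K : Type*) [Field K] :
    LinearIndependent K (A.map (reinterpret K)).col ↔
      ∃ f : n → m, ((A.map (reinterpret ℤ)).submatrix f id).det ≠ 0 := by
  have hmap : A.map (reinterpret K) = (A.map (reinterpret ℤ)).map (Int.castRingHom K) := by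
    ext i j
    simp [intCast_reinterpret]
  rw [hmap, hA.linearIndependent_col_map_iff]

/-- If a real matrix `A` is totally unimodular, then for every field `F`, the matrix
obtained by interpreting the entries of `A` (all in `{0,1,-1}`) as elements of `F` represents a
matroid on the column index set independent of `F`: a set of columns of `A` is linearly
independent over the rationals iff the corresponding set of columns is linearly independent
over `F`. -/
theorem stmt2 {m n : Type*} [Fintype m] [Fintype n] (A : Matrix m n ℝ)
    (hA : IsTotUnimodular A)
    (F : Type*) [Field F] (s : Set n) :
    LinearIndependent ℚ (fun j : s => fun i : m => reinterpret ℚ (A i j)) ↔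
      LinearIndependent F (fun j : s => fun i : m => reinterpret F (A i j)) := by
  have hB : ((A.submatrix id ((↑) : s → n)).map (reinterpret ℤ)).IsTotallyUnimodular :=
    hA.isTotallyUnimodular_map_reinterpret_int.submatrix id _
  exact (linearIndependent_col_map_reinterpret_iff hB ℚ).trans
    (linearIndependent_col_map_reinterpret_iff hB F).symm
end

section
/- A matroid M on a finite ground set is a strict gammoid if and only if its dual matroid M* is a transversal matroid. -/
/-- `Linked Adj B X` : `X` can be linked into `B` in the directed graph with adjacency `Adj`
by pairwise vertex-disjoint directed paths. -/
def Linked {V : Type*} (Adj : V → V → Prop) (B : Set V) (X : Set V) : Prop :=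
  ∃ P : X → List V,
    (∀ x : X, (P x).Chain' Adj ∧ (P x).Nodup ∧ (P x).head? = some x.1 ∧
      ∃ y ∈ B, (P x).getLast? = some y) ∧
    ∀ x x' : X, x ≠ x' → ∀ v ∈ P x, v ∉ P x'

/-- `X` is a partial transversal of the family `A : J → Set S`. -/
def PartialTransversal {S J : Type*} (A : J → Set S) (X : Set S) : Prop :=
  ∃ f : S → J, Set.InjOn f X ∧ ∀ x ∈ X, x ∈ A (f x)

/-- A matroid (on its whole ground type) is a strict gammoid if its independent sets are exactly
the vertex subsets of some directed graph linkable into a fixed vertex set `B` by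
vertex-disjoint directed paths. -/
def IsStrictGammoid {E : Type*} (M : Matroid E) : Prop :=
  ∃ (Adj : E → E → Prop) (B : Set E), ∀ X : Set E, M.Indep X ↔ Linked Adj B X

/-- A matroid is transversal if its independent sets are exactly the partial transversals of
some finite family of subsets of the ground set. -/
def IsTransversalMatroid {E : Type*} (M : Matroid E) : Prop :=
  ∃ (n : ℕ) (A : Fin n → Set E), ∀ X : Set E, M.Indep X ↔ PartialTransversal A X

/-!
Linkages into `B` are encoded by *linking maps*: injections `f` of `Bᶜ` moving every vertex to
itself or to an out-neighbour. A set `X` is linkable into `B` iff it misses `f '' Bᶜ` for some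
linking map `f` (move each path vertex one step forward; conversely, iterate `f` from each
`x ∈ X` until it reaches `B`). So the bases of a strict gammoid are the sets `(f '' Bᶜ)ᶜ`, its
cobases are the sets `f '' Bᶜ`, and these are exactly the transversals of the family
`{v} ∪ N⁺(v)`, `v ∉ B`; hence `M✶` is transversal.

Conversely, let `M✶` be presented by a family `A`, and let `W₀` be a cobase matched by `F₀`.
An augmenting-path argument shows that every cobase can be matched into the indices `F₀ '' W₀`,
so the cobases are the sets `f '' W₀` with `f` injective on `W₀` and `f w ∈ A (F₀ w)`. These
are the linking maps of the digraph with arcs `w → A (F₀ w)`, `w ∈ W₀`, and target `W₀ᶜ`, so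
`M` is the strict gammoid of that digraph.
-/

open Set Function

namespace List

variable {α : Type*} {l : List α} {a b c x y : α}

theorem pair_infix_cons_cons : [a, b] <:+: x :: y :: l ↔ a = x ∧ b = y ∨ [a, b] <:+: y :: l := by
  rw [infix_cons_iff]
  simp [cons_prefix_cons]

theorem mem_of_pair_infix_cons (h : [a, b] <:+: x :: l) : b ∈ l := by
  rcases infix_cons_iff.1 h with ⟨t, ht⟩ | h
  · simp [← (cons.inj ht).2]
  · exact h.subset (by simp)

theorem Nodup.eq_of_pair_infix_left (hl : l.Nodup) (hb : [a, b] <:+: l)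
    (hc : [a, c] <:+: l) : b = c := by
  induction l with
  | nil => simp [infix_nil] at hb
  | cons x l ih =>
    cases l with
    | nil => simp [infix_cons_iff, cons_prefix_cons] at hb
    | cons y l =>
      have hx : x ∉ y :: l := (nodup_cons.1 hl).1
      rw [pair_infix_cons_cons] at hb hc
      rcases hb with ⟨rfl, rfl⟩ | hb <;> rcases hc with ⟨hax, rfl⟩ | hc
      · rfl
      · exact (hx (hc.subset (by simp))).elim
      · exact (hx (hax ▸ hb.subset (by simp))).elim
      · exact ih hl.of_cons hb hc

theorem Nodup.eq_of_pair_infix_right (hl : l.Nodup) (ha : [a, c] <:+: l)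
    (hb : [b, c] <:+: l) : a = b :=
  (nodup_reverse.2 hl).eq_of_pair_infix_left (reverse_infix.2 ha) (reverse_infix.2 hb)

theorem exists_pair_infix_of_mem_of_getLast?_ne (ha : a ∈ l) (hlast : l.getLast? ≠ some a) :
    ∃ b, [a, b] <:+: l := by
  induction l with
  | nil => simp at ha
  | cons x l ih =>
    cases l with
    | nil => simp_all
    | cons y l =>
      rcases mem_cons.1 ha with rfl | ha
      · exact ⟨y, pair_infix_cons_cons.2 (Or.inl ⟨rfl, rfl⟩)⟩
      · obtain ⟨b, hb⟩ := ih ha (by rwa [getLast?_cons_cons] at hlast)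
        exact ⟨b, infix_cons hb⟩

end List

theorem Set.InjOn.piecewise {α β : Type*} {s t : Set α} {f g : α → β} [∀ j, Decidable (j ∈ s)]
    (hf : InjOn f (t ∩ s)) (hg : InjOn g (t \ s)) (hfg : ∀ x ∈ t ∩ s, ∀ y ∈ t \ s, f x ≠ g y) :
    InjOn (s.piecewise f g) t := by
  intro x hx y hy h
  by_cases hxs : x ∈ s <;> by_cases hys : y ∈ s <;>
    simp only [piecewise_eq_of_mem, piecewise_eq_of_notMem, hxs, hys, not_false_eq_true] at h
  · exact hf ⟨hx, hxs⟩ ⟨hy, hys⟩ h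
  · exact (hfg x ⟨hx, hxs⟩ y ⟨hy, hys⟩ h).elim
  · exact (hfg y ⟨hy, hys⟩ x ⟨hx, hxs⟩ h.symm).elim
  · exact hg ⟨hx, hxs⟩ ⟨hy, hys⟩ h

theorem Matroid.Indep.isBase_of_ncard_le {α : Type*} [Finite α] {M : Matroid α} {I B : Set α}
    (hI : M.Indep I) (hB : M.IsBase B) (h : B.ncard ≤ I.ncard) : M.IsBase I := by
  obtain ⟨B', hB', hIB'⟩ := hI.exists_isBase_superset
  rwa [eq_of_subset_of_ncard_le hIB' (hB'.ncard_eq_ncard_of_isBase hB ▸ h)]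

section Linking

variable {V : Type*} {Adj : V → V → Prop} {B X : Set V} {f : V → V}

def IsLinkingMap (Adj : V → V → Prop) (B : Set V) (f : V → V) : Prop :=
  InjOn f Bᶜ ∧ ∀ v ∈ Bᶜ, f v = v ∨ Adj v (f v)

-- `Succ v w` abstracts "`w` follows `v` on one of the paths", and `C` the vertices on the paths.
theorem exists_isLinkingMap_of_succ {Succ : V → V → Prop} {C : Set V} (hXC : X ⊆ C)
    (hadj : ∀ {v w}, Succ v w → Adj v w ∧ w ∈ C) (hinj : ∀ {v v' w}, Succ v w → Succ v' w → v = v')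
    (hX : ∀ {v x}, x ∈ X → ¬ Succ v x) (hsucc : ∀ {v}, v ∈ C → v ∉ B → ∃ w, Succ v w) :
    ∃ f, IsLinkingMap Adj B f ∧ Disjoint X (f '' Bᶜ) := by
  classical
  let f (v : V) : V := if h : ∃ w, Succ v w then h.choose else v
  have hf {v} (hv : v ∈ Bᶜ) : Succ v (f v) ∨ f v = v ∧ v ∉ C := by
    by_cases h : ∃ w, Succ v w
    · exact .inl (by simpa only [f, dif_pos h] using h.choose_spec)
    · exact .inr ⟨by simp only [f, dif_neg h], fun hvC => h (hsucc hvC hv)⟩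
  refine ⟨f, ⟨fun v hv v' hv' heq => ?_, fun v hv => ?_⟩, ?_⟩
  · rcases hf hv with h | ⟨h, hvC⟩ <;> rcases hf hv' with h' | ⟨h', hv'C⟩
    · exact hinj h (heq ▸ h')
    · exact (hv'C (h' ▸ heq ▸ (hadj h).2)).elim
    · exact (hvC (h ▸ heq ▸ (hadj h').2)).elim
    · rwa [h, h'] at heq
  · rcases hf hv with h | ⟨h, -⟩
    · exact .inr (hadj h).1
    · exact .inl h
  · rw [Set.disjoint_left]
    rintro _ hxX ⟨v, hv, rfl⟩
    rcases hf hv with h | ⟨h, hvC⟩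
    · exact hX hxX h
    · exact hvC (hXC (h ▸ hxX))

open List in
theorem Linked.exists_isLinkingMap (h : Linked Adj B X) :
    ∃ f, IsLinkingMap Adj B f ∧ Disjoint X (f '' Bᶜ) := by
  obtain ⟨P, hP, hdisj⟩ := h
  have hsame {v : V} {x x' : X} (hx : v ∈ P x) (hx' : v ∈ P x') : x = x' :=
    by_contra fun hne => hdisj _ _ hne _ hx hx'
  have hmem (x : X) : x.1 ∈ P x := mem_of_mem_head? (hP x).2.2.1
  refine exists_isLinkingMap_of_succ (Succ := fun v w => ∃ x : X, [v, w] <:+: P x)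
    (C := {v | ∃ x : X, v ∈ P x}) (fun x hx => ⟨⟨x, hx⟩, hmem _⟩) ?_ ?_ ?_ ?_
  · rintro v w ⟨x, hx⟩
    exact ⟨isChain_pair.1 ((hP x).1.infix hx), x, hx.subset (by simp)⟩
  · rintro v v' w ⟨x, hx⟩ ⟨x', hx'⟩
    obtain rfl := hsame (hx.subset (by simp : w ∈ [v, w])) (hx'.subset (by simp : w ∈ [v', w]))
    exact (hP x).2.1.eq_of_pair_infix_right hx hx'
  · rintro v x hxX ⟨x', hx'⟩
    obtain rfl := hsame (hmem ⟨x, hxX⟩) (hx'.subset (by simp : x ∈ [v, x]))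
    obtain ⟨l, hl⟩ := head?_eq_some_iff.1 (hP ⟨x, hxX⟩).2.2.1
    rw [hl] at hx'
    exact (nodup_cons.1 (hl ▸ (hP _).2.1)).1 (mem_of_pair_infix_cons hx')
  · rintro v ⟨x, hvx⟩ hvB
    obtain ⟨y, hyB, hy⟩ := (hP x).2.2.2
    obtain ⟨w, hw⟩ := exists_pair_infix_of_mem_of_getLast?_ne hvx
      (by rw [hy]; rintro ⟨⟩; exact hvB hyB)
    exact ⟨w, x, hw⟩

theorem IsLinkingMap.eq_of_iterate_eq (hf : IsLinkingMap Adj B f) (hX : Disjoint X (f '' Bᶜ))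
    {x x' : V} (hx : x ∈ X) (hx' : x' ∈ X) {i j : ℕ} (hi : ∀ t < i, f^[t] x ∈ Bᶜ)
    (hj : ∀ t < j, f^[t] x' ∈ Bᶜ) (h : f^[i] x = f^[j] x') : i = j ∧ x = x' := by
  induction i generalizing j with
  | zero =>
    cases j with
    | zero => exact ⟨rfl, h⟩
    | succ j =>
      rw [iterate_succ_apply'] at h
      exact (Set.disjoint_left.1 hX hx ⟨_, hj j j.lt_succ_self, h.symm⟩).elim
  | succ i ih =>
    cases j with
    | zero =>
      rw [iterate_succ_apply'] at h
      exact (Set.disjoint_left.1 hX hx' ⟨_, hi i i.lt_succ_self, h⟩).elim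
    | succ j =>
      rw [iterate_succ_apply', iterate_succ_apply'] at h
      obtain ⟨rfl, rfl⟩ := ih (fun t ht => hi t (ht.trans i.lt_succ_self))
        (fun t ht => hj t (ht.trans j.lt_succ_self))
        (hf.1 (hi i i.lt_succ_self) (hj j j.lt_succ_self) h)
      exact ⟨rfl, rfl⟩

theorem IsLinkingMap.exists_iterate_mem [Finite V] (hf : IsLinkingMap Adj B f)
    (hX : Disjoint X (f '' Bᶜ)) {x : V} (hx : x ∈ X) : ∃ k, f^[k] x ∈ B := by
  by_contra! h
  exact not_injective_infinite_finite (fun k => f^[k] x)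
    fun i j hij => (hf.eq_of_iterate_eq hX hx hx (fun t _ => h t) (fun t _ => h t) hij).1

theorem IsLinkingMap.linked [Finite V] (hf : IsLinkingMap Adj B f) (hX : Disjoint X (f '' Bᶜ)) :
    Linked Adj B X := by
  classical
  have hit (x : X) := hf.exists_iterate_mem hX x.2
  have hbefore (x : X) : ∀ t < Nat.find (hit x), f^[t] x ∈ Bᶜ := fun t => Nat.find_min (hit x)
  have hinj {x x' : X} {i j : ℕ} (hi : i ≤ Nat.find (hit x)) (hj : j ≤ Nat.find (hit x'))
      (h : f^[i] x = f^[j] x') : i = j ∧ x = x' := by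
    obtain ⟨hij, hxx'⟩ := hf.eq_of_iterate_eq hX x.2 x'.2 (fun t ht => hbefore x t (by omega))
      (fun t ht => hbefore x' t (by omega)) h
    exact ⟨hij, Subtype.ext hxx'⟩
  refine ⟨fun x => (List.range (Nat.find (hit x) + 1)).map (f^[·] x), fun x => ⟨?_, ?_, ?_, ?_⟩,
    fun x x' hne v hv hv' => ?_⟩
  · rw [List.Chain', List.isChain_map, List.isChain_range_succ]
    intro k hk
    rcases hf.2 _ (hbefore x k hk) with h | h
    · rw [← iterate_succ_apply' f k] at h
      exact absurd (hinj hk.le hk h.symm).1 (by omega)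
    · rwa [← iterate_succ_apply' f k] at h
  · refine List.Nodup.map_on (fun i hi j hj h => (hinj ?_ ?_ h).1) List.nodup_range
    exacts [Nat.lt_succ_iff.1 (List.mem_range.1 hi), Nat.lt_succ_iff.1 (List.mem_range.1 hj)]
  · rw [List.head?_map, List.head?_range]; rfl
  · exact ⟨_, Nat.find_spec (hit x), by rw [List.getLast?_map, List.getLast?_range]; simp⟩
  · simp only [List.mem_map, List.mem_range] at hv hv'
    obtain ⟨i, hi, rfl⟩ := hv
    obtain ⟨j, hj, hij⟩ := hv'
    exact hne (hinj (by omega) (by omega) hij.symm).2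

theorem linked_iff_exists_isLinkingMap [Finite V] :
    Linked Adj B X ↔ ∃ f, IsLinkingMap Adj B f ∧ Disjoint X (f '' Bᶜ) :=
  ⟨Linked.exists_isLinkingMap, fun ⟨_, hf, hX⟩ => hf.linked hX⟩

theorem IsLinkingMap.ncard_compl_image [Finite V] (hf : IsLinkingMap Adj B f) :
    (f '' Bᶜ)ᶜ.ncard = B.ncard := by
  have h₁ := ncard_add_ncard_compl (f '' Bᶜ)
  have h₂ := ncard_add_ncard_compl B
  rw [hf.1.ncard_image] at h₁
  omega

end Linking

section StrictGammoid

variable {V : Type*} [Finite V] {M : Matroid V} {Adj : V → V → Prop} {B W Z : Set V}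

theorem isBase_iff_exists_isLinkingMap (hM : ∀ X, M.Indep X ↔ Linked Adj B X) :
    M.IsBase Z ↔ ∃ f, IsLinkingMap Adj B f ∧ Z = (f '' Bᶜ)ᶜ := by
  have hindep {f} (hf : IsLinkingMap Adj B f) : M.Indep (f '' Bᶜ)ᶜ :=
    (hM _).2 (hf.linked disjoint_compl_left)
  have hbase {Z} (hZ : M.IsBase Z) : ∃ f, IsLinkingMap Adj B f ∧ Z = (f '' Bᶜ)ᶜ := by
    obtain ⟨f, hf, hZf⟩ := ((hM Z).1 hZ.indep).exists_isLinkingMap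
    exact ⟨f, hf, hZ.eq_of_subset_indep (hindep hf) (subset_compl_iff_disjoint_right.2 hZf)⟩
  refine ⟨hbase, ?_⟩
  rintro ⟨f, hf, rfl⟩
  obtain ⟨Z', hZ'⟩ := M.exists_isBase
  obtain ⟨f', hf', rfl⟩ := hbase hZ'
  exact (hindep hf).isBase_of_ncard_le hZ' (by rw [hf.ncard_compl_image, hf'.ncard_compl_image])

theorem dual_isBase_iff_exists_isLinkingMap (hM : ∀ X, M.Indep X ↔ Linked Adj B X)
    (hE : M.E = univ) : M✶.IsBase W ↔ ∃ f, IsLinkingMap Adj B f ∧ f '' Bᶜ = W := by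
  rw [Matroid.dual_isBase_iff (hE ▸ subset_univ W), hE, ← compl_eq_univ_sdiff,
    isBase_iff_exists_isLinkingMap hM]
  simp only [compl_inj_iff, eq_comm]

theorem dual_indep_iff_exists_isLinkingMap (hM : ∀ X, M.Indep X ↔ Linked Adj B X)
    (hE : M.E = univ) : M✶.Indep W ↔ ∃ f, IsLinkingMap Adj B f ∧ W ⊆ f '' Bᶜ := by
  simp only [Matroid.indep_iff, dual_isBase_iff_exists_isLinkingMap hM hE, exists_exists_and_eq_and]

end StrictGammoid

def IsMatching {S J : Type*} (A : J → Set S) (F : S → J) (X : Set S) : Prop :=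
  InjOn F X ∧ ∀ x ∈ X, x ∈ A (F x)

section LinkingFamily

variable {V : Type*} [Finite V] {Adj : V → V → Prop} {B Y : Set V}

def linkingFamily (Adj : V → V → Prop) (B : Set V) (v : V) : Set V :=
  {u | v ∉ B ∧ (u = v ∨ Adj v u)}

theorem PartialTransversal.exists_isMatching_linkingFamily
    (h : PartialTransversal (linkingFamily Adj B) Y) :
    ∃ ψ, IsMatching (linkingFamily Adj B) ψ Y ∧ ∀ v ∈ Y, v ∉ B → v ∈ ψ '' Y := by
  classical
  obtain ⟨ψ, hψ, hmax⟩ := exists_max_image {ψ | IsMatching (linkingFamily Adj B) ψ Y}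
    (fun ψ => {y ∈ Y | ψ y = y}.ncard) (toFinite _) h
  refine ⟨ψ, hψ, fun v hvY hvB => ?_⟩
  -- otherwise rematching `v` to itself gives a matching with one more fixed point
  by_contra hv
  have hfix : ψ v ≠ v := fun h => hv ⟨v, hvY, h⟩
  have hψ' : IsMatching (linkingFamily Adj B) (update ψ v v) Y := by
    refine ⟨fun y hy y' hy' h => ?_, fun y hy => ?_⟩
    · by_cases hyv : y = v <;> by_cases hy'v : y' = v <;>
        simp only [hyv, hy'v, update_self, update_of_ne, Ne, not_false_eq_true] at h
      · exact hyv.trans hy'v.symm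
      · exact (hv ⟨y', hy', h.symm⟩).elim
      · exact (hv ⟨y, hy, h⟩).elim
      · exact hψ.1 hy hy' h
    · by_cases hyv : y = v
      · subst hyv; simpa [linkingFamily] using hvB
      · rw [update_of_ne hyv]; exact hψ.2 y hy
  refine (hmax _ hψ').not_gt (ncard_lt_ncard ((ssubset_iff_of_subset ?_).2
    ⟨v, ⟨hvY, update_self ..⟩, fun h => hfix h.2⟩))
  rintro y ⟨hy, hψy⟩
  refine ⟨hy, ?_⟩
  rwa [update_of_ne (by rintro rfl; exact hfix hψy)]

theorem partialTransversal_linkingFamily_iff :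
    PartialTransversal (linkingFamily Adj B) Y ↔ ∃ f, IsLinkingMap Adj B f ∧ Y ⊆ f '' Bᶜ := by
  classical
  constructor
  · intro h
    obtain ⟨ψ, hψ, hcover⟩ := h.exists_isMatching_linkingFamily
    choose! g hgY hψg using fun v (hv : v ∈ ψ '' Y) => hv
    refine ⟨(ψ '' Y).piecewise g id, ⟨InjOn.piecewise ?_ (injOn_id _) ?_, fun v hv => ?_⟩, ?_⟩
    · exact fun v hv v' hv' h => by rw [← hψg v hv.2, ← hψg v' hv'.2, h]
    · rintro v ⟨-, hv⟩ v' ⟨hv', hv'Y⟩ h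
      exact hv'Y (hcover v' ((show g v = v' from h) ▸ hgY v hv) hv')
    · by_cases hvY : v ∈ ψ '' Y
      · rw [piecewise_eq_of_mem _ _ _ hvY]
        have := hψ.2 _ (hgY v hvY)
        rw [hψg v hvY] at this
        exact this.2
      · exact .inl (piecewise_eq_of_notMem _ _ _ hvY)
    · intro y hy
      have hψy : ψ y ∈ ψ '' Y := mem_image_of_mem ψ hy
      refine ⟨ψ y, (hψ.2 y hy).1, ?_⟩
      rw [piecewise_eq_of_mem _ _ _ hψy]
      exact hψ.1 (hgY _ hψy) hy (hψg _ hψy)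
  · rintro ⟨f, hf, hY⟩
    choose! φ hφB hfφ using fun y (hy : y ∈ Y) => hY hy
    refine ⟨φ, fun y hy y' hy' h => by rw [← hfφ y hy, ← hfφ y' hy', h], fun y hy => ?_⟩
    have := hf.2 _ (hφB y hy)
    rw [hfφ y hy] at this
    exact ⟨hφB y hy, this⟩

end LinkingFamily

section Alternating

variable {S J : Type*} {A : J → Set S} {F F₀ : S → J} {W W₀ : Set S} {z₀ z w : S}

def alternatingSet (F F₀ : S → J) (W W₀ : Set S) (z₀ : S) : Set S :=
  {z | Relation.ReflTransGen (fun a b => a ∈ W₀ ∧ b ∈ W ∧ F b = F₀ a) z₀ z}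

theorem self_mem_alternatingSet : z₀ ∈ alternatingSet F F₀ W W₀ z₀ :=
  Relation.ReflTransGen.refl

theorem alternatingSet_subset (hz₀ : z₀ ∈ W) : alternatingSet F F₀ W W₀ z₀ ⊆ W := by
  intro z hz
  induction hz with
  | refl => exact hz₀
  | tail _ hstep _ => exact hstep.2.1

theorem mem_alternatingSet_of_eq (hz : z ∈ alternatingSet F F₀ W W₀ z₀) (hzW₀ : z ∈ W₀)
    (hw : w ∈ W) (hFw : F w = F₀ z) : w ∈ alternatingSet F F₀ W W₀ z₀ :=
  Relation.ReflTransGen.tail hz ⟨hzW₀, hw, hFw⟩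

theorem exists_mem_alternatingSet_of_ne (hz : z ∈ alternatingSet F F₀ W W₀ z₀) (hne : z ≠ z₀) :
    ∃ w ∈ alternatingSet F F₀ W W₀ z₀, w ∈ W₀ ∧ F z = F₀ w := by
  rcases Relation.ReflTransGen.cases_tail hz with rfl | ⟨w, hw, hwW₀, -, hFz⟩
  · exact (hne rfl).elim
  · exact ⟨w, hw, hwW₀, hFz⟩

theorem IsMatching.piecewise_alternatingSet_union [∀ j, Decidable (j ∈ alternatingSet F F₀ W W₀ z₀)]
    (hF : IsMatching A F W) (hF₀ : IsMatching A F₀ W₀) (hz₀ : z₀ ∈ W) (hbad : F z₀ ∉ F₀ '' W₀) :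
    IsMatching A ((alternatingSet F F₀ W W₀ z₀).piecewise F F₀)
      (alternatingSet F F₀ W W₀ z₀ ∪ W₀) := by
  have hZW := alternatingSet_subset (F := F) (F₀ := F₀) (W₀ := W₀) hz₀
  refine ⟨InjOn.piecewise (hF.1.mono (inter_subset_right.trans hZW))
    (hF₀.1.mono fun x hx => hx.1.resolve_left hx.2) ?_, fun x hx => ?_⟩
  · rintro x ⟨-, hxZ⟩ y ⟨hy, hyZ⟩ hxy
    have hyW₀ := hy.resolve_left hyZ
    by_cases hx : x = z₀
    · exact hbad ⟨y, hyW₀, (hx ▸ hxy).symm⟩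
    · obtain ⟨w, hwZ, hwW₀, hFx⟩ := exists_mem_alternatingSet_of_ne hxZ hx
      exact hyZ (hF₀.1 hwW₀ hyW₀ (hFx ▸ hxy) ▸ hwZ)
  · by_cases hxZ : x ∈ alternatingSet F F₀ W W₀ z₀
    · rw [piecewise_eq_of_mem _ _ _ hxZ]; exact hF.2 x (hZW hxZ)
    · rw [piecewise_eq_of_notMem _ _ _ hxZ]; exact hF₀.2 x (hx.resolve_left hxZ)

theorem IsMatching.piecewise_alternatingSet [∀ j, Decidable (j ∈ alternatingSet F F₀ W W₀ z₀)]
    (hF : IsMatching A F W) (hF₀ : IsMatching A F₀ W₀) (hZ : alternatingSet F F₀ W W₀ z₀ ⊆ W₀) :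
    IsMatching A ((alternatingSet F F₀ W W₀ z₀).piecewise F₀ F) W := by
  refine ⟨InjOn.piecewise (hF₀.1.mono (inter_subset_right.trans hZ)) (hF.1.mono sdiff_subset) ?_,
    fun x hx => ?_⟩
  · rintro x ⟨-, hxZ⟩ y ⟨hy, hyZ⟩ hxy
    exact hyZ (mem_alternatingSet_of_eq hxZ (hZ hxZ) hy hxy.symm)
  · by_cases hxZ : x ∈ alternatingSet F F₀ W W₀ z₀
    · rw [piecewise_eq_of_mem _ _ _ hxZ]; exact hF₀.2 x (hZ hxZ)
    · rw [piecewise_eq_of_notMem _ _ _ hxZ]; exact hF.2 x hx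

end Alternating

section Transversal

variable {E J : Type*} [Finite E] [Finite J] {N : Matroid E} {A : J → Set E} {F₀ : E → J}
  {W W₀ : Set E}

theorem exists_isMatching_image_subset (hN : ∀ X, N.Indep X ↔ PartialTransversal A X)
    (hW₀ : N.IsBase W₀) (hF₀ : IsMatching A F₀ W₀) (hW : N.Indep W) :
    ∃ F, IsMatching A F W ∧ F '' W ⊆ F₀ '' W₀ := by
  classical
  obtain ⟨F, hF, hmax⟩ := exists_max_image {F | IsMatching A F W}
    (fun F => {w ∈ W | F w ∈ F₀ '' W₀}.ncard) (toFinite _) ((hN W).1 hW)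
  refine ⟨F, hF, ?_⟩
  rintro _ ⟨z₀, hz₀, rfl⟩
  by_contra hbad
  -- Either the alternating set of `z₀` stays in `W₀`, and rematching it by `F₀` sends one more
  -- element into `F₀ '' W₀`, or it leaves `W₀` and enlarges the base `W₀` to an independent set.
  by_cases hZ : alternatingSet F F₀ W W₀ z₀ ⊆ W₀
  · have hz₀W₀ := hZ self_mem_alternatingSet
    have hsub : {w ∈ W | F w ∈ F₀ '' W₀} ⊆
        {w ∈ W | (alternatingSet F F₀ W W₀ z₀).piecewise F₀ F w ∈ F₀ '' W₀} := by
      rintro w ⟨hw, hFw⟩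
      refine ⟨hw, ?_⟩
      by_cases hwZ : w ∈ alternatingSet F F₀ W W₀ z₀
      · rw [piecewise_eq_of_mem _ _ _ hwZ]; exact mem_image_of_mem F₀ (hZ hwZ)
      · rwa [piecewise_eq_of_notMem _ _ _ hwZ]
    refine (hmax _ (hF.piecewise_alternatingSet hF₀ hZ)).not_gt (ncard_lt_ncard
      ((ssubset_iff_of_subset hsub).2 ⟨z₀, ⟨hz₀, ?_⟩, fun h => hbad h.2⟩))
    rw [piecewise_eq_of_mem _ _ _ self_mem_alternatingSet]
    exact mem_image_of_mem F₀ hz₀W₀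
  · have hindep := (hN _).2 ⟨_, hF.piecewise_alternatingSet_union hF₀ hz₀ hbad⟩
    exact hZ (union_eq_right.1 (hW₀.eq_of_subset_indep hindep subset_union_right).symm)

theorem isBase_iff_exists_injOn (hN : ∀ X, N.Indep X ↔ PartialTransversal A X)
    (hW₀ : N.IsBase W₀) (hF₀ : IsMatching A F₀ W₀) :
    N.IsBase W ↔ ∃ f : E → E, (InjOn f W₀ ∧ ∀ w ∈ W₀, f w ∈ A (F₀ w)) ∧ f '' W₀ = W := by
  constructor
  · intro hW
    obtain ⟨F, hF, hFW⟩ := exists_isMatching_image_subset hN hW₀ hF₀ hW.indep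
    have hFW' : F '' W = F₀ '' W₀ := eq_of_subset_of_ncard_le hFW (by
      rw [hF.1.ncard_image, hF₀.1.ncard_image, hW.ncard_eq_ncard_of_isBase hW₀])
    choose! f hfW hFf using fun w (hw : w ∈ W₀) => hFW'.symm ▸ mem_image_of_mem F₀ hw
    have hf : InjOn f W₀ := fun w hw w' hw' h => hF₀.1 hw hw' (by rw [← hFf w hw, ← hFf w' hw', h])
    refine ⟨f, ⟨hf, fun w hw => hFf w hw ▸ hF.2 _ (hfW w hw)⟩, ?_⟩
    refine eq_of_subset_of_ncard_le (image_subset_iff.2 hfW) ?_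
    rw [hf.ncard_image, hW.ncard_eq_ncard_of_isBase hW₀]
  · rintro ⟨f, ⟨hf, hfA⟩, rfl⟩
    choose! g hgW₀ hfg using fun y (hy : y ∈ f '' W₀) => hy
    have hindep : N.Indep (f '' W₀) := (hN _).2 ⟨F₀ ∘ g,
      fun y hy y' hy' h => by rw [← hfg y hy, ← hfg y' hy', hF₀.1 (hgW₀ y hy) (hgW₀ y' hy') h],
      fun y hy => by simpa only [comp_apply, hfg y hy] using hfA _ (hgW₀ y hy)⟩
    exact hindep.isBase_of_ncard_le hW₀ hf.ncard_image.ge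

end Transversal

theorem isTransversalMatroid_of_forall_indep_iff {E J : Type*} [Finite J] {M : Matroid E}
    (A : J → Set E) (h : ∀ X, M.Indep X ↔ PartialTransversal A X) : IsTransversalMatroid M := by
  obtain ⟨n, ⟨e⟩⟩ := Finite.exists_equiv_fin J
  refine ⟨n, A ∘ e.symm, fun X => (h X).trans ⟨?_, ?_⟩⟩
  · rintro ⟨F, hF, hFA⟩
    exact ⟨e ∘ F, e.injective.comp_injOn hF, by simpa using hFA⟩
  · rintro ⟨F, hF, hFA⟩
    exact ⟨e.symm ∘ F, e.symm.injective.comp_injOn hF, hFA⟩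

/-- A matroid `M` on a finite ground set is a strict gammoid iff its dual `M✶`
is a transversal matroid. -/
theorem stmt6 {E : Type*} [Fintype E] (M : Matroid E) (hE : M.E = Set.univ) :
    IsStrictGammoid M ↔ IsTransversalMatroid M✶ := by
  constructor
  · rintro ⟨Adj, B, hM⟩
    refine isTransversalMatroid_of_forall_indep_iff (linkingFamily Adj B) fun Y => ?_
    rw [dual_indep_iff_exists_isLinkingMap hM hE, partialTransversal_linkingFamily_iff]
  · rintro ⟨n, A, hA⟩
    obtain ⟨W₀, hW₀⟩ := M✶.exists_isBase
    obtain ⟨F₀, hF₀⟩ := (hA W₀).1 hW₀.indep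
    let Adj (a b : E) : Prop := a ∈ W₀ ∧ b ∈ A (F₀ a)
    have hlink (f : E → E) :
        IsLinkingMap Adj W₀ᶜ f ↔ InjOn f W₀ ∧ ∀ w ∈ W₀, f w ∈ A (F₀ w) := by
      simp only [IsLinkingMap, compl_compl, Adj]
      refine and_congr_right fun _ => forall₂_congr fun w hw => ?_
      exact ⟨fun h => h.elim (fun e => e.symm ▸ hF₀.2 w hw) And.right, fun h => .inr ⟨hw, h⟩⟩
    refine ⟨Adj, W₀ᶜ, fun X => ?_⟩
    rw [linked_iff_exists_isLinkingMap, ← M.dual_dual, Matroid.dual_indep_iff_exists']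
    simp only [isBase_iff_exists_injOn hA hW₀ hF₀, hlink, compl_compl, exists_exists_and_eq_and,
      Matroid.dual_ground, hE, subset_univ, true_and]
end

section
/- Let M be a matroid on S, x ∈ S, and y ∉ S. Define sM(x, y) on S ∪ {y} to be the collection of sets of the form B ∪ {y} for B a base of M, together with sets of the form B ∪ {x} for B a base of M with x ∉ B. Then sM(x, y) is the collection of bases of a matroid on S ∪ {y} (the series extension of M at x by y). -/
/-- For a matroid on `S` given by its base collection `ℬ` (nonempty, satisfying
the base exchange axiom, with every base contained in `S`), `x ∈ S` and `y ∉ S`, the collection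
`sM(x,y)` of sets of the form `B ∪ {y}` (`B` a base) and `B ∪ {x}` (`B` a base, `x ∉ B`) is the
collection of bases of a matroid on `S ∪ {y}` (the series extension of `M` at `x` by `y`):
it is nonempty, consists of subsets of `S ∪ {y}`, and satisfies the base exchange axiom. -/
theorem stmt10 {α : Type*} [DecidableEq α] (S : Finset α) (ℬ : Finset α → Prop)
    (hsub : ∀ B, ℬ B → B ⊆ S)
    (hne : ∃ B, ℬ B)
    (hexch : ∀ B₁ B₂, ℬ B₁ → ℬ B₂ → ∀ a ∈ B₁ \ B₂, ∃ b ∈ B₂ \ B₁,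
      ℬ (insert b (B₁.erase a)))
    (x : α) (hx : x ∈ S) (y : α) (hy : y ∉ S) :
    -- the series extension
    let sℬ : Finset α → Prop := fun C =>
      (∃ B, ℬ B ∧ C = insert y B) ∨ (∃ B, ℬ B ∧ x ∉ B ∧ C = insert x B)
    (∃ C, sℬ C) ∧
    (∀ C, sℬ C → C ⊆ insert y S) ∧
    (∀ C₁ C₂, sℬ C₁ → sℬ C₂ → ∀ a ∈ C₁ \ C₂, ∃ b ∈ C₂ \ C₁,
      sℬ (insert b (C₁.erase a))) := by
  intro sℬ
  obtain ⟨B0, hB0⟩ := hne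
  have hyB : ∀ B, ℬ B → y ∉ B := fun B hB h => hy (hsub B hB h)
  have hyx : y ≠ x := fun h => hy (h ▸ hx)
  refine ⟨⟨insert y B0, Or.inl ⟨B0, hB0, rfl⟩⟩, ?_, ?_⟩
  · rintro C (⟨B, hB, rfl⟩ | ⟨B, hB, hxB, rfl⟩)
    · exact Finset.insert_subset_insert _ (hsub B hB)
    · exact Finset.insert_subset (Finset.mem_insert_of_mem hx)
        ((hsub B hB).trans (Finset.subset_insert _ _))
  · rintro C₁ C₂ (⟨B₁, hB₁, rfl⟩ | ⟨B₁, hB₁, hxB₁, rfl⟩)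
      (⟨B₂, hB₂, rfl⟩ | ⟨B₂, hB₂, hxB₂, rfl⟩) a ha <;>
      rw [Finset.mem_sdiff, Finset.mem_insert, Finset.mem_insert, not_or] at ha
    · -- C₁ = y∪B₁, C₂ = y∪B₂
      have hay : a ≠ y := ha.2.1
      have haB₁ : a ∈ B₁ := ha.1.resolve_left hay
      obtain ⟨b, hb, hb'⟩ := hexch B₁ B₂ hB₁ hB₂ a (Finset.mem_sdiff.2 ⟨haB₁, ha.2.2⟩)
      rw [Finset.mem_sdiff] at hb
      have hby : b ≠ y := fun h => hyB B₂ hB₂ (h ▸ hb.1)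
      refine ⟨b, Finset.mem_sdiff.2 ⟨Finset.mem_insert_of_mem hb.1, ?_⟩,
        Or.inl ⟨insert b (B₁.erase a), hb', ?_⟩⟩
      · simp [hby, hb.2]
      · rw [show (insert y B₁).erase a = insert y (B₁.erase a) from
          Finset.erase_insert_of_ne (Ne.symm hay), Finset.insert_comm]
    · -- C₁ = y∪B₁, C₂ = x∪B₂ with x∉B₂
      by_cases hay : a = y
      · rw [hay]
        have herase : (insert y B₁).erase y = B₁ := Finset.erase_insert (hyB B₁ hB₁)
        by_cases hxB₁ : x ∈ B₁
        · obtain ⟨b, hb, hb'⟩ := hexch B₁ B₂ hB₁ hB₂ x (Finset.mem_sdiff.2 ⟨hxB₁, hxB₂⟩)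
          rw [Finset.mem_sdiff] at hb
          have hby : b ≠ y := fun h => hyB B₂ hB₂ (h ▸ hb.1)
          have hbx : b ≠ x := fun h => hb.2 (h ▸ hxB₁)
          refine ⟨b, Finset.mem_sdiff.2 ⟨Finset.mem_insert_of_mem hb.1, ?_⟩,
            Or.inr ⟨insert b (B₁.erase x), hb', ?_, ?_⟩⟩
          · simp [hby, hb.2]
          · simp [Ne.symm hbx, Finset.mem_erase]
          · rw [herase, ← Finset.insert_erase (show x ∈ insert b B₁ from
              Finset.mem_insert_of_mem hxB₁), Finset.erase_insert_of_ne hbx]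
        · refine ⟨x, Finset.mem_sdiff.2 ⟨Finset.mem_insert_self _ _, ?_⟩,
            Or.inr ⟨B₁, hB₁, hxB₁, by rw [herase]⟩⟩
          simp [Ne.symm hyx, hxB₁]
      · have haB₁ : a ∈ B₁ := ha.1.resolve_left hay
        obtain ⟨b, hb, hb'⟩ := hexch B₁ B₂ hB₁ hB₂ a (Finset.mem_sdiff.2 ⟨haB₁, ha.2.2⟩)
        rw [Finset.mem_sdiff] at hb
        have hby : b ≠ y := fun h => hyB B₂ hB₂ (h ▸ hb.1)
        refine ⟨b, Finset.mem_sdiff.2 ⟨Finset.mem_insert_of_mem hb.1, ?_⟩,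
          Or.inl ⟨insert b (B₁.erase a), hb', ?_⟩⟩
        · simp [hby, hb.2]
        · rw [show (insert y B₁).erase a = insert y (B₁.erase a) from
            Finset.erase_insert_of_ne (Ne.symm hay), Finset.insert_comm]
    · -- C₁ = x∪B₁ (x∉B₁), C₂ = y∪B₂
      by_cases hax : a = x
      · rw [hax]
        have herase : (insert x B₁).erase x = B₁ := Finset.erase_insert hxB₁
        refine ⟨y, Finset.mem_sdiff.2 ⟨Finset.mem_insert_self _ _, ?_⟩,
          Or.inl ⟨B₁, hB₁, by rw [herase]⟩⟩
        simp [hyx, hyB B₁ hB₁]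
      · have haB₁ : a ∈ B₁ := ha.1.resolve_left hax
        obtain ⟨b, hb, hb'⟩ := hexch B₁ B₂ hB₁ hB₂ a (Finset.mem_sdiff.2 ⟨haB₁, ha.2.2⟩)
        rw [Finset.mem_sdiff] at hb
        have herase : (insert x B₁).erase a = insert x (B₁.erase a) :=
          Finset.erase_insert_of_ne (Ne.symm hax)
        by_cases hbx : b = x
        · refine ⟨y, Finset.mem_sdiff.2 ⟨Finset.mem_insert_self _ _, ?_⟩,
            Or.inl ⟨insert x (B₁.erase a), hbx ▸ hb', by rw [herase]⟩⟩
          simp [hyx, hyB B₁ hB₁]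
        · have hby : b ≠ y := fun h => hyB B₂ hB₂ (h ▸ hb.1)
          refine ⟨b, Finset.mem_sdiff.2 ⟨Finset.mem_insert_of_mem hb.1, ?_⟩,
            Or.inr ⟨insert b (B₁.erase a), hb', ?_, ?_⟩⟩
          · simp [hbx, hb.2]
          · simp [Ne.symm hbx, Finset.mem_erase, hxB₁]
          · rw [herase, Finset.insert_comm]
    · -- C₁ = x∪B₁ (x∉B₁), C₂ = x∪B₂ (x∉B₂)
      have hax : a ≠ x := ha.2.1
      have haB₁ : a ∈ B₁ := ha.1.resolve_left hax
      obtain ⟨b, hb, hb'⟩ := hexch B₁ B₂ hB₁ hB₂ a (Finset.mem_sdiff.2 ⟨haB₁, ha.2.2⟩)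
      rw [Finset.mem_sdiff] at hb
      have hbx : b ≠ x := fun h => hxB₂ (h ▸ hb.1)
      refine ⟨b, Finset.mem_sdiff.2 ⟨Finset.mem_insert_of_mem hb.1, ?_⟩,
        Or.inr ⟨insert b (B₁.erase a), hb', ?_, ?_⟩⟩
      · simp [hbx, hb.2]
      · simp [Ne.symm hbx, Finset.mem_erase, hxB₁]
      · rw [show (insert x B₁).erase a = insert x (B₁.erase a) from
          Finset.erase_insert_of_ne (Ne.symm hax), Finset.insert_comm]
end

section
/- A series-parallel extension of a gammoid is a gammoid; in particular, a parallel extension of a strict gammoid is a gammoid. -/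
/-- The matroid with ground set `E` and base collection `ℬ` is a gammoid: it is isomorphic (via
an injection `φ` of the ground set into the vertex set of a directed graph) to the restriction
of a strict gammoid `L(G, B₀)` to a subset of the vertices, the bases being the maximal
linkable sets. -/
def IsGammoidBases {α : Type} [DecidableEq α] (E : Finset α) (ℬ : Finset α → Prop) : Prop :=
  ∃ (V : Type) (Adj : V → V → Prop) (B₀ : Set V) (φ : α → V),
    Set.InjOn φ ↑E ∧
    ∀ B : Finset α, ℬ B ↔
      ((B ⊆ E ∧ Linked Adj B₀ (φ '' ↑B)) ∧
        ∀ B' : Finset α, (B' ⊆ E ∧ Linked Adj B₀ (φ '' ↑B')) → B ⊆ B' → B = B')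

/-- The matroid with ground set `E` and base collection `ℬ` is a strict gammoid: there is a
directed graph on the vertex set `E` itself, and a target set `B₀ ⊆ E`, such that the bases are
exactly the maximal subsets of `E` linkable into `B₀` by vertex-disjoint directed paths. -/
def IsStrictGammoidBases {α : Type} [DecidableEq α] (E : Finset α) (ℬ : Finset α → Prop) :
    Prop :=
  ∃ (Adj : α → α → Prop) (B₀ : Set α), (∀ u v, Adj u v → u ∈ E ∧ v ∈ E) ∧ B₀ ⊆ ↑E ∧
    ∀ B : Finset α, ℬ B ↔
      ((B ⊆ E ∧ Linked Adj B₀ ↑B) ∧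
        ∀ B' : Finset α, (B' ⊆ E ∧ Linked Adj B₀ ↑B') → B ⊆ B' → B = B')

/-- One step of series or parallel extension, acting on a pair (ground set, base collection):
the new element `y` is fresh, and the new bases are those of the series extension `sM(x,y)`
or of the parallel extension `pM(x,y)`. -/
def SPStep {α : Type} [DecidableEq α]
    (M M' : Finset α × (Finset α → Prop)) : Prop :=
  ∃ x ∈ M.1, ∃ y ∉ M.1, M'.1 = insert y M.1 ∧
    ((∀ C, M'.2 C ↔
        (∃ B, M.2 B ∧ C = insert y B) ∨ (∃ B, M.2 B ∧ x ∉ B ∧ C = insert x B)) ∨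
     (∀ C, M'.2 C ↔
        M.2 C ∨ (∃ B, M.2 B ∧ x ∈ B ∧ C = insert y (B.erase x))))

/-!
A gammoid is presented by a digraph, a set of targets and an injection of the ground set into
the vertices, its bases being the maximal sets that can be linked into the targets. Both
extensions are realised by attaching sources (vertices without incoming edges) to such a
presentation. For `pM(x,y)` the element `y` becomes a source whose only edge leads to the vertex
of `x`: linking `y` is the same as linking `x`, and the two cannot be linked together. For
`sM(x,y)` the element `x` moves to a source with edges into its old vertex and into a new
target, which represents `y`: a set containing `y` must route `x` through its old vertex, while a
set avoiding `y` can always send `x` to that target. In both cases the linkable sets of the new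
presentation are described through those of the old one, and an exchange argument identifies
their maximal members with the bases of the extension. A strict gammoid is a gammoid via the
identity embedding.
-/

section LinkPath

variable {V : Type*} {Adj : V → V → Prop} {B₀ : Set V}

def IsLinkPath (Adj : V → V → Prop) (B₀ : Set V) (v : V) (l : List V) : Prop :=
  l.IsChain Adj ∧ l.Nodup ∧ l.head? = some v ∧ ∃ y ∈ B₀, l.getLast? = some y

def IsLinkage (Adj : V → V → Prop) (B₀ : Set V) (X : Set V) (P : V → List V) : Prop :=
  (∀ x ∈ X, IsLinkPath Adj B₀ x (P x)) ∧ X.Pairwise fun x x' => (P x).Disjoint (P x')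

theorem linked_iff_exists_isLinkage {X : Set V} :
    Linked Adj B₀ X ↔ ∃ P, IsLinkage Adj B₀ X P := by
  classical
  constructor
  · rintro ⟨P, hpath, hdisj⟩
    refine ⟨fun v => if hv : v ∈ X then P ⟨v, hv⟩ else [], fun x hx => ?_,
      fun x hx x' hx' hne => ?_⟩
    · simp only [dif_pos hx]
      exact hpath ⟨x, hx⟩
    · simp only [dif_pos hx, dif_pos hx']
      exact hdisj ⟨x, hx⟩ ⟨x', hx'⟩ (by simpa using hne)
  · rintro ⟨P, hpath, hdisj⟩
    exact ⟨fun x => P x, fun x => hpath x x.2,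
      fun x x' hne v hv hv' => hdisj x.2 x'.2 (Subtype.coe_ne_coe.2 hne) hv hv'⟩

namespace IsLinkPath

variable {v w a : V} {l : List V}

theorem head_mem (h : IsLinkPath Adj B₀ v l) : v ∈ l :=
  List.mem_of_mem_head? h.2.2.1

theorem singleton (hv : v ∈ B₀) : IsLinkPath Adj B₀ v [v] :=
  ⟨List.isChain_singleton v, List.nodup_singleton v, rfl, v, hv, rfl⟩

theorem cons (h : IsLinkPath Adj B₀ w l) (hadj : Adj a w) (ha : a ∉ l) :
    IsLinkPath Adj B₀ a (a :: l) := by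
  obtain ⟨hchain, hnodup, hhead, y, hy, hlast⟩ := h
  obtain ⟨l', rfl⟩ : ∃ l', l = w :: l' := by
    cases l with
    | nil => simp at hhead
    | cons b l' => exact ⟨l', by simpa using hhead⟩
  exact ⟨List.isChain_cons_cons.2 ⟨hadj, hchain⟩, List.nodup_cons.2 ⟨ha, hnodup⟩, rfl, y, hy,
    by rwa [List.getLast?_cons_cons]⟩

theorem eq_cons (h : IsLinkPath Adj B₀ a l) (ha : a ∉ B₀) :
    ∃ w l', l = a :: l' ∧ Adj a w ∧ IsLinkPath Adj B₀ w l' := by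
  obtain ⟨hchain, hnodup, hhead, y, hy, hlast⟩ := h
  match l, hhead, hlast with
  | [_], rfl, hlast =>
    obtain rfl : a = y := by simpa using hlast
    exact absurd hy ha
  | _ :: w :: l', rfl, hlast =>
    rw [List.isChain_cons_cons] at hchain
    exact ⟨w, w :: l', rfl, hchain.1, hchain.2, hnodup.of_cons, rfl, y, hy,
      by rwa [List.getLast?_cons_cons] at hlast⟩

theorem notMem_of_forall_not_adj (h : IsLinkPath Adj B₀ v l) (hin : ∀ u, ¬ Adj u a)
    (hva : v ≠ a) : a ∉ l := by
  refine fun hal => (h.1.induction (· ≠ a) l (fun x y hxy _ hya => hin x (hya ▸ hxy))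
    (fun hl heq => hva ?_) a hal) rfl
  simpa [List.head?_eq_some_head hl, heq] using h.2.2.1.symm

end IsLinkPath

end LinkPath

section Linkage

variable {V : Type*} {Adj : V → V → Prop} {B₀ : Set V} {X Y : Set V} {P : V → List V}

theorem IsLinkage.mono (hP : IsLinkage Adj B₀ Y P) (hXY : X ⊆ Y) : IsLinkage Adj B₀ X P :=
  ⟨fun x hx => hP.1 x (hXY hx), hP.2.mono hXY⟩

theorem Linked.mono (h : Linked Adj B₀ Y) (hXY : X ⊆ Y) : Linked Adj B₀ X := by
  obtain ⟨P, hP⟩ := linked_iff_exists_isLinkage.1 h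
  exact linked_iff_exists_isLinkage.2 ⟨P, hP.mono hXY⟩

theorem IsLinkage.linked_insert {a : V} {q : List V} (hP : IsLinkage Adj B₀ X P)
    (hq : IsLinkPath Adj B₀ a q) (hdisj : ∀ x ∈ X, (P x).Disjoint q) (ha : a ∉ X) :
    Linked Adj B₀ (insert a X) := by
  classical
  have hupd : ∀ x ∈ X, Function.update P a q x = P x := fun x hx =>
    Function.update_of_ne (ne_of_mem_of_not_mem hx ha) _ _
  refine linked_iff_exists_isLinkage.2 ⟨Function.update P a q, ?_, ?_⟩
  · rintro x (rfl | hx)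
    · rwa [Function.update_self]
    · rw [hupd x hx]; exact hP.1 x hx
  · refine (Set.pairwise_insert_of_notMem ha).2 ⟨fun x hx x' hx' hne => ?_, fun x hx => ?_⟩
    · dsimp only
      rw [hupd x hx, hupd x' hx']
      exact hP.2 hx hx' hne
    · rw [hupd x hx, Function.update_self]
      exact ⟨(hdisj x hx).symm, hdisj x hx⟩

theorem linked_insert_iff_of_forall_not_adj {a : V} (hin : ∀ u, ¬ Adj u a) (haB : a ∉ B₀)
    (haX : a ∉ X) :
    Linked Adj B₀ (insert a X) ↔ ∃ w, Adj a w ∧ w ∉ X ∧ Linked Adj B₀ (insert w X) := by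
  constructor
  · intro h
    obtain ⟨P, hP⟩ := linked_iff_exists_isLinkage.1 h
    obtain ⟨w, l, hPa, haw, hl⟩ := (hP.1 a (Set.mem_insert a X)).eq_cons haB
    have hdisj : ∀ x ∈ X, (P x).Disjoint l := fun x hx => by
      have := hP.2 (Set.mem_insert_of_mem a hx) (Set.mem_insert a X)
        (ne_of_mem_of_not_mem hx haX)
      dsimp only at this
      rw [hPa] at this
      exact List.disjoint_of_disjoint_cons_right this
    have hwX : w ∉ X := fun hw => hdisj w hw (hP.1 w (Set.mem_insert_of_mem a hw)).head_mem
      hl.head_mem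
    exact ⟨w, haw, hwX, (hP.mono (Set.subset_insert a X)).linked_insert hl hdisj hwX⟩
  · rintro ⟨w, haw, hwX, h⟩
    obtain ⟨P, hP⟩ := linked_iff_exists_isLinkage.1 h
    have hwa : w ≠ a := fun h => hin a (h ▸ haw)
    refine (hP.mono (Set.subset_insert w X)).linked_insert
      ((hP.1 w (Set.mem_insert w X)).cons haw
        ((hP.1 w (Set.mem_insert w X)).notMem_of_forall_not_adj hin hwa))
      (fun x hx => List.disjoint_cons_right.2 ⟨?_, ?_⟩) haX
    · exact (hP.1 x (Set.mem_insert_of_mem w hx)).notMem_of_forall_not_adj hin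
        (ne_of_mem_of_not_mem hx haX)
    · exact hP.2 (Set.mem_insert_of_mem w hx) (Set.mem_insert w X) (ne_of_mem_of_not_mem hx hwX)

end Linkage

structure IsForwardClosedEmbedding {V V' : Type*} (Adj : V → V → Prop) (B₀ : Set V)
    (Adj' : V' → V' → Prop) (B₀' : Set V') (f : V → V') : Prop where
  injective : f.Injective
  adj_iff : ∀ u v, Adj' (f u) (f v) ↔ Adj u v
  mem_range_of_adj : ∀ u w, Adj' (f u) w → w ∈ Set.range f
  mem_iff : ∀ v, f v ∈ B₀' ↔ v ∈ B₀

namespace IsForwardClosedEmbedding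

variable {V V' : Type*} {Adj : V → V → Prop} {B₀ : Set V} {Adj' : V' → V' → Prop}
  {B₀' : Set V'} {f : V → V'}

theorem isLinkPath_map_iff (hf : IsForwardClosedEmbedding Adj B₀ Adj' B₀' f) {v : V}
    {m : List V} : IsLinkPath Adj' B₀' (f v) (m.map f) ↔ IsLinkPath Adj B₀ v m := by
  simp only [IsLinkPath, List.isChain_map, hf.adj_iff, List.nodup_map_iff hf.injective,
    List.head?_map, List.getLast?_map, Option.map_eq_some_iff, hf.injective.eq_iff]
  constructor
  · rintro ⟨hc, hn, ⟨_, hh, rfl⟩, _, hy, z, hz, rfl⟩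
    exact ⟨hc, hn, hh, z, (hf.mem_iff z).1 hy, hz⟩
  · rintro ⟨hc, hn, hh, z, hz, hl⟩
    exact ⟨hc, hn, ⟨v, hh, rfl⟩, f z, (hf.mem_iff z).2 hz, z, hl, rfl⟩

theorem mem_range_of_isLinkPath (hf : IsForwardClosedEmbedding Adj B₀ Adj' B₀' f) {v : V}
    {l : List V'} (hl : IsLinkPath Adj' B₀' (f v) l) : ∀ w ∈ l, w ∈ Set.range f := by
  refine hl.1.induction _ l (fun _ _ hxy ⟨u, hu⟩ => hf.mem_range_of_adj u _ (hu ▸ hxy))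
    (fun hne => ⟨v, ?_⟩)
  simpa [List.head?_eq_some_head hne] using hl.2.2.1.symm

theorem linked_image_iff (hf : IsForwardClosedEmbedding Adj B₀ Adj' B₀' f) {S : Set V} :
    Linked Adj' B₀' (f '' S) ↔ Linked Adj B₀ S := by
  simp only [linked_iff_exists_isLinkage]
  constructor
  · rintro ⟨P', hpath, hdisj⟩
    have hlift : ∀ v, ∃ m : List V, v ∈ S → P' (f v) = m.map f := fun v => by
      by_cases hv : v ∈ S
      · have : P' (f v) ∈ Set.range (List.map f) := by
          rw [Set.range_list_map]
          exact hf.mem_range_of_isLinkPath (hpath _ (Set.mem_image_of_mem f hv))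
        obtain ⟨m, hm⟩ := this
        exact ⟨m, fun _ => hm.symm⟩
      · exact ⟨[], fun h => absurd h hv⟩
    choose P hP using hlift
    refine ⟨P, fun v hv => ?_, fun v hv v' hv' hne => ?_⟩
    · rw [← hf.isLinkPath_map_iff, ← hP v hv]
      exact hpath _ (Set.mem_image_of_mem f hv)
    · have := hdisj (Set.mem_image_of_mem f hv) (Set.mem_image_of_mem f hv')
        (hf.injective.ne hne)
      dsimp only at this ⊢
      rw [hP v hv, hP v' hv'] at this
      exact this.of_map
  · rintro ⟨P, hpath, hdisj⟩
    have hext : ∀ v, Function.extend f (fun v => (P v).map f) (fun _ => []) (f v) =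
        (P v).map f := fun v => hf.injective.extend_apply _ _ v
    refine ⟨Function.extend f (fun v => (P v).map f) (fun _ => []), ?_, ?_⟩
    · rintro _ ⟨v, hv, rfl⟩
      rw [hext, hf.isLinkPath_map_iff]
      exact hpath v hv
    · rintro _ ⟨v, hv, rfl⟩ _ ⟨v', hv', rfl⟩ hne
      rw [hext, hext]
      exact (hdisj hv hv' (fun h => hne (h ▸ rfl))).map hf.injective

theorem linked_insert_image_iff (hf : IsForwardClosedEmbedding Adj B₀ Adj' B₀' f)
    {S : Set V} {t : V'} (ht : t ∈ B₀') (htf : t ∉ Set.range f) :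
    Linked Adj' B₀' (insert t (f '' S)) ↔ Linked Adj B₀ S := by
  refine ⟨fun h => hf.linked_image_iff.1 (h.mono (Set.subset_insert t _)), fun h => ?_⟩
  obtain ⟨P, hP⟩ := linked_iff_exists_isLinkage.1 (hf.linked_image_iff.2 h)
  refine hP.linked_insert (IsLinkPath.singleton ht) ?_ (fun ⟨v, _, hv⟩ => htf ⟨v, hv⟩)
  rintro _ ⟨v, hv, rfl⟩
  exact (List.singleton_disjoint.2 fun hmem =>
    htf (hf.mem_range_of_isLinkPath (hP.1 _ (Set.mem_image_of_mem f hv)) t hmem)).symm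

theorem linked_insert_iff_of_adj_iff (hf : IsForwardClosedEmbedding Adj B₀ Adj' B₀' f)
    {a : V'} {w : V} (hin : ∀ u, ¬ Adj' u a) (haB : a ∉ B₀') (haf : a ∉ Set.range f)
    (hadj : ∀ v, Adj' a v ↔ v = f w) {S : Set V} :
    Linked Adj' B₀' (insert a (f '' S)) ↔ w ∉ S ∧ Linked Adj B₀ (insert w S) := by
  have haS : a ∉ f '' S := fun ⟨v, _, hv⟩ => haf ⟨v, hv⟩
  rw [linked_insert_iff_of_forall_not_adj hin haB haS]
  simp only [hadj, exists_eq_left, hf.injective.mem_set_image, ← Set.image_insert_eq,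
    hf.linked_image_iff]

end IsForwardClosedEmbedding

section Maximality

variable {α : Type*} [DecidableEq α] {E : Finset α} {x y : α} {L L' : Finset α → Prop}

theorem maximal_parallel_iff (hx : x ∈ E) (hy : y ∉ E) (hL : ∀ B, L B → B ⊆ E)
    (hL' : ∀ C, L' C ↔ (y ∉ C ∧ L C) ∨ (y ∈ C ∧ x ∉ C ∧ L (insert x (C.erase y))))
    (C : Finset α) :
    Maximal L' C ↔ Maximal L C ∨ ∃ B, Maximal L B ∧ x ∈ B ∧ C = insert y (B.erase x) := by
  have hyL : ∀ {B}, L B → y ∉ B := fun hB h => hy (hL _ hB h)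
  have hxy : x ≠ y := ne_of_mem_of_not_mem hx hy
  have L'_of_L : ∀ {B}, L B → L' B := fun hB => (hL' _).2 (Or.inl ⟨hyL hB, hB⟩)
  have L'_swap : ∀ {B}, L B → x ∈ B → L' (insert y (B.erase x)) := fun {B} hB hxB =>
    (hL' _).2 (Or.inr ⟨Finset.mem_insert_self y _, by simp [hxy],
      by rwa [Finset.erase_insert (mt Finset.mem_of_mem_erase (hyL hB)), Finset.insert_erase hxB]⟩)
  constructor
  · intro hC
    rcases (hL' C).1 hC.prop with ⟨hyC, hLC⟩ | ⟨hyC, hxC, hB⟩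
    · exact Or.inl (maximal_iff.2 ⟨hLC, fun D hD hCD => hC.eq_of_le (L'_of_L hD) hCD⟩)
    · have hxCy : x ∉ C.erase y := mt Finset.mem_of_mem_erase hxC
      refine Or.inr ⟨_, maximal_iff.2 ⟨hB, fun D hD hBD => ?_⟩, Finset.mem_insert_self x _,
        by rw [Finset.erase_insert hxCy, Finset.insert_erase hyC]⟩
      obtain ⟨hxD, hCD⟩ := Finset.insert_subset_iff.1 hBD
      rw [hC.eq_of_le (L'_swap hD hxD) (Finset.subset_insert_iff.2
          (Finset.subset_erase.2 ⟨hCD, hxCy⟩)),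
        Finset.erase_insert (mt Finset.mem_of_mem_erase (hyL hD)), Finset.insert_erase hxD]
  · rintro (hC | ⟨B, hB, hxB, rfl⟩)
    · refine maximal_iff.2 ⟨L'_of_L hC.prop, fun D hD hCD => ?_⟩
      rcases (hL' D).1 hD with ⟨-, hLD⟩ | ⟨hyD, hxD, hLD⟩
      · exact hC.eq_of_le hLD hCD
      · have := hC.eq_of_le hLD
          ((Finset.subset_erase.2 ⟨hCD, hyL hC.prop⟩).trans (Finset.subset_insert x _))
        exact absurd (hCD (this ▸ Finset.mem_insert_self x _)) hxD
    · refine maximal_iff.2 ⟨L'_swap hB.prop hxB, fun D hD hCD => ?_⟩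
      obtain ⟨hyD, hBD⟩ := Finset.insert_subset_iff.1 hCD
      obtain ⟨-, hxD, hLD⟩ := ((hL' D).1 hD).resolve_left fun h => h.1 hyD
      have := hB.eq_of_le hLD (Finset.insert_erase hxB ▸ Finset.insert_subset_insert x
        (Finset.subset_erase.2 ⟨hBD, mt Finset.mem_of_mem_erase (hyL hB.prop)⟩))
      rw [this, Finset.erase_insert (mt Finset.mem_of_mem_erase hxD), Finset.insert_erase hyD]

theorem maximal_series_iff (hx : x ∈ E) (hy : y ∉ E) (hL : ∀ B, L B → B ⊆ E)
    (hL' : ∀ C, L' C ↔ (y ∈ C ∧ L (C.erase y)) ∨ (y ∉ C ∧ L (C.erase x))) (C : Finset α) :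
    Maximal L' C ↔
      (∃ B, Maximal L B ∧ C = insert y B) ∨ (∃ B, Maximal L B ∧ x ∉ B ∧ C = insert x B) := by
  have hyL : ∀ {B}, L B → y ∉ B := fun hB h => hy (hL _ hB h)
  have hxy : x ≠ y := ne_of_mem_of_not_mem hx hy
  have L'_insert_y : ∀ {B}, L B → L' (insert y B) := fun {B} hB =>
    (hL' _).2 (Or.inl ⟨Finset.mem_insert_self y B, by rwa [Finset.erase_insert (hyL hB)]⟩)
  have L'_insert_x : ∀ {B}, L B → x ∉ B → L' (insert x B) := fun hB hxB =>
    (hL' _).2 (Or.inr ⟨by simp [hxy.symm, hyL hB], by rwa [Finset.erase_insert hxB]⟩)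
  constructor
  · intro hC
    rcases (hL' C).1 hC.prop with ⟨hyC, hB⟩ | ⟨hyC, hB⟩
    · refine Or.inl ⟨C.erase y, maximal_iff.2 ⟨hB, fun D hD hBD => ?_⟩,
        (Finset.insert_erase hyC).symm⟩
      rw [hC.eq_of_le (L'_insert_y hD) (Finset.subset_insert_iff.2 hBD),
        Finset.erase_insert (hyL hD)]
    · have hxC : x ∈ C := by
        by_contra hxC
        rw [Finset.erase_eq_of_notMem hxC] at hB
        exact hyC (hC.eq_of_le (L'_insert_y hB) (C.subset_insert y) ▸ C.mem_insert_self y)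
      refine Or.inr ⟨C.erase x, maximal_iff.2 ⟨hB, fun D hD hBD => ?_⟩, C.notMem_erase x,
        (Finset.insert_erase hxC).symm⟩
      by_cases hxD : x ∈ D
      · have hCD : C ⊆ insert y D :=
          (Finset.insert_erase hxC ▸ Finset.insert_subset hxD hBD).trans (D.subset_insert y)
        exact absurd (hC.eq_of_le (L'_insert_y hD) hCD ▸ D.mem_insert_self y) hyC
      · rw [hC.eq_of_le (L'_insert_x hD hxD) (Finset.subset_insert_iff.2 hBD),
          Finset.erase_insert hxD]
  · rintro (⟨B, hB, rfl⟩ | ⟨B, hB, hxB, rfl⟩)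
    · refine maximal_iff.2 ⟨L'_insert_y hB.prop, fun D hD hCD => ?_⟩
      have hyD : y ∈ D := hCD (B.mem_insert_self y)
      have hLD : L (D.erase y) := by simpa [hyD] using (hL' D).1 hD
      rw [hB.eq_of_le hLD (Finset.subset_erase.2 ⟨(Finset.insert_subset_iff.1 hCD).2,
        hyL hB.prop⟩), Finset.insert_erase hyD]
    · refine maximal_iff.2 ⟨L'_insert_x hB.prop hxB, fun D hD hCD => ?_⟩
      obtain ⟨hxD, hBD⟩ := Finset.insert_subset_iff.1 hCD
      rcases (hL' D).1 hD with ⟨hyD, hLD⟩ | ⟨hyD, hLD⟩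
      · have := hB.eq_of_le hLD (Finset.subset_erase.2 ⟨hBD, hyL hB.prop⟩)
        exact absurd (this ▸ Finset.mem_erase.2 ⟨hxy, hxD⟩) hxB
      · rw [hB.eq_of_le hLD (Finset.subset_erase.2 ⟨hBD, hxB⟩), Finset.insert_erase hxD]

end Maximality

section Parallel

variable {α : Type*} [DecidableEq α] {V : Type*}

def parallelAdj (Adj : V → V → Prop) (w : V) : Option V → Option V → Prop
  | some u, some v => Adj u v
  | none, some v => v = w
  | _, none => False

def parallelMap (φ : α → V) (y : α) (a : α) : Option V :=
  if a = y then none else some (φ a)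

variable {Adj : V → V → Prop} {B₀ : Set V} {φ : α → V} {E : Finset α} {x y : α}

theorem isForwardClosedEmbedding_parallel (w : V) :
    IsForwardClosedEmbedding Adj B₀ (parallelAdj Adj w) (some '' B₀) some where
  injective := Option.some_injective V
  adj_iff _ _ := Iff.rfl
  mem_range_of_adj := by
    rintro u (_ | v) h
    exacts [h.elim, ⟨v, rfl⟩]
  mem_iff _ := (Option.some_injective V).mem_set_image

theorem parallelMap_image (C : Finset α) : parallelMap φ y '' C =
    if y ∈ C then insert none (some '' (φ '' ↑(C.erase y))) else some '' (φ '' C) := by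
  ext v
  split_ifs with hyC <;> simp [parallelMap] <;> grind

theorem injOn_parallelMap (hφ : Set.InjOn φ E) :
    Set.InjOn (parallelMap φ y) ↑(insert y E) := by
  intro a ha b hb hab
  simp only [parallelMap, Finset.coe_insert, Set.mem_insert_iff, Finset.mem_coe] at *
  split_ifs at hab <;> grind [Set.InjOn]

theorem linked_parallel_iff (hφ : Set.InjOn φ E) (hx : x ∈ E) (hy : y ∉ E) (C : Finset α) :
    (C ⊆ insert y E ∧ Linked (parallelAdj Adj (φ x)) (some '' B₀) (parallelMap φ y '' C)) ↔
      (y ∉ C ∧ C ⊆ E ∧ Linked Adj B₀ (φ '' C)) ∨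
      (y ∈ C ∧ x ∉ C ∧ insert x (C.erase y) ⊆ E ∧
        Linked Adj B₀ (φ '' ↑(insert x (C.erase y)))) := by
  have hf := isForwardClosedEmbedding_parallel (Adj := Adj) (B₀ := B₀) (φ x)
  by_cases hyC : y ∈ C
  · have hnone : ∀ v, parallelAdj Adj (φ x) none v ↔ v = some (φ x) := by
      rintro (_ | v) <;> simp [parallelAdj]
    rw [parallelMap_image, if_pos hyC]
    simp only [hyC, not_true_eq_false, false_and, true_and, false_or]
    rw [hf.linked_insert_iff_of_adj_iff (by rintro (_ | _) <;> exact id) (by simp) (by simp)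
      hnone, Finset.subset_insert_iff, Finset.insert_subset_iff, Finset.coe_insert,
      Set.image_insert_eq]
    constructor
    · rintro ⟨hCE, hxC, hL⟩
      exact ⟨fun h => hxC (Set.mem_image_of_mem φ (Finset.mem_erase.2
        ⟨ne_of_mem_of_not_mem hx hy, h⟩)), ⟨hx, hCE⟩, hL⟩
    · rintro ⟨hxC, ⟨-, hCE⟩, hL⟩
      exact ⟨hCE, fun h => hxC (Finset.mem_of_mem_erase
        ((hφ.mem_image_iff (Finset.coe_subset.2 hCE) hx).1 h)), hL⟩
  · simp [parallelMap_image, hyC, Finset.subset_insert_iff_of_notMem hyC, hf.linked_image_iff]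

end Parallel

section Series

variable {α : Type*} [DecidableEq α] {V : Type*}

def seriesAdj (Adj : V → V → Prop) (w : V) : V ⊕ Bool → V ⊕ Bool → Prop
  | .inl u, .inl v => Adj u v
  | .inr false, .inl v => v = w
  | .inr false, .inr true => True
  | _, _ => False

def seriesTargets (B₀ : Set V) : Set (V ⊕ Bool) := insert (.inr true) (Sum.inl '' B₀)

def seriesMap (φ : α → V) (x y : α) (a : α) : V ⊕ Bool :=
  if a = y then .inr true else if a = x then .inr false else .inl (φ a)

variable {Adj : V → V → Prop} {B₀ : Set V} {φ : α → V} {E : Finset α} {x y : α}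

theorem isForwardClosedEmbedding_series (w : V) :
    IsForwardClosedEmbedding Adj B₀ (seriesAdj Adj w) (seriesTargets B₀) Sum.inl where
  injective := Sum.inl_injective
  adj_iff _ _ := Iff.rfl
  mem_range_of_adj := by
    rintro u (v | _) h
    exacts [⟨v, rfl⟩, h.elim]
  mem_iff _ := by simp [seriesTargets]

theorem linked_series_insert_false_iff {w : V} {S : Set V} :
    Linked (seriesAdj Adj w) (seriesTargets B₀) (insert (.inr false) (Sum.inl '' S)) ↔
      Linked Adj B₀ S := by
  have hf := isForwardClosedEmbedding_series (Adj := Adj) (B₀ := B₀) w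
  refine ⟨fun h => hf.linked_image_iff.1 (h.mono (Set.subset_insert _ _)), fun h => ?_⟩
  refine (linked_insert_iff_of_forall_not_adj (by rintro (_ | _ | _) <;> exact id)
    (by simp [seriesTargets]) (by simp)).2 ⟨.inr true, trivial, by simp, ?_⟩
  exact (hf.linked_insert_image_iff (by simp [seriesTargets]) (by simp)).2 h

theorem linked_series_insert_false_true_iff {w : V} {S : Set V} :
    Linked (seriesAdj Adj w) (seriesTargets B₀)
        (insert (.inr false) (insert (.inr true) (Sum.inl '' S))) ↔
      w ∉ S ∧ Linked Adj B₀ (insert w S) := by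
  have hf := isForwardClosedEmbedding_series (Adj := Adj) (B₀ := B₀) w
  rw [linked_insert_iff_of_forall_not_adj (by rintro (_ | _ | _) <;> exact id)
    (by simp [seriesTargets]) (by simp)]
  constructor
  · rintro ⟨v | (_ | _), hv, hvS, h⟩
    · obtain rfl : v = w := hv
      rw [Set.insert_comm, ← Set.image_insert_eq,
        hf.linked_insert_image_iff (by simp [seriesTargets]) (by simp)] at h
      exact ⟨fun hv => hvS (Set.mem_insert_of_mem _ ⟨v, hv, rfl⟩), h⟩
    · exact hv.elim
    · exact absurd (Set.mem_insert _ _) hvS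
  · rintro ⟨hwS, h⟩
    refine ⟨.inl w, rfl, by simpa using hwS, ?_⟩
    rwa [Set.insert_comm, ← Set.image_insert_eq,
      hf.linked_insert_image_iff (by simp [seriesTargets]) (by simp)]

theorem seriesMap_image (hxy : x ≠ y) (C : Finset α) : seriesMap φ x y '' C =
    (if x ∈ C then insert (.inr false) else id) ((if y ∈ C then insert (.inr true) else id)
      (Sum.inl '' (φ '' ↑((C.erase x).erase y)))) := by
  ext v
  split_ifs <;> simp [seriesMap] <;> grind

theorem injOn_seriesMap (hφ : Set.InjOn φ E) : Set.InjOn (seriesMap φ x y) ↑(insert y E) := by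
  intro a ha b hb hab
  simp only [seriesMap, Finset.coe_insert, Set.mem_insert_iff, Finset.mem_coe] at *
  split_ifs at hab <;> grind [Set.InjOn]

theorem linked_series_iff (hφ : Set.InjOn φ E) (hx : x ∈ E) (hy : y ∉ E) (C : Finset α) :
    (C ⊆ insert y E ∧
        Linked (seriesAdj Adj (φ x)) (seriesTargets B₀) (seriesMap φ x y '' C)) ↔
      (y ∈ C ∧ C.erase y ⊆ E ∧ Linked Adj B₀ (φ '' ↑(C.erase y))) ∨
      (y ∉ C ∧ C.erase x ⊆ E ∧ Linked Adj B₀ (φ '' ↑(C.erase x))) := by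
  have hxy : x ≠ y := ne_of_mem_of_not_mem hx hy
  have hf := isForwardClosedEmbedding_series (Adj := Adj) (B₀ := B₀) (φ x)
  rw [seriesMap_image hxy]
  by_cases hyC : y ∈ C <;> by_cases hxC : x ∈ C <;>
    simp only [hyC, hxC, if_true, if_false, id, true_and, not_true_eq_false, false_and, or_false,
      not_false_eq_true, false_or]
  · have hC : C.erase y = insert x ((C.erase x).erase y) := by
      rw [Finset.erase_right_comm, Finset.insert_erase (Finset.mem_erase.2 ⟨hxy, hxC⟩)]
    rw [linked_series_insert_false_true_iff, Finset.subset_insert_iff, hC, Finset.coe_insert,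
      Set.image_insert_eq]
    refine and_congr_right fun hCE => ⟨fun h => h.2, fun h => ⟨fun hmem => ?_, h⟩⟩
    have := (hφ.mem_image_iff (Finset.coe_subset.2 ((Finset.insert_subset_iff.1 hCE).2)) hx).1 hmem
    exact Finset.notMem_erase x C (Finset.mem_of_mem_erase this)
  · rw [Finset.erase_eq_of_notMem hxC, Finset.subset_insert_iff,
      hf.linked_insert_image_iff (by simp [seriesTargets]) (by simp)]
  · rw [Finset.erase_eq_of_notMem (mt Finset.mem_of_mem_erase hyC),
      linked_series_insert_false_iff, Finset.subset_insert_iff_of_notMem hyC,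
      ← Finset.subset_insert_iff, Finset.insert_eq_of_mem hx]
  · rw [Finset.erase_eq_of_notMem hxC, Finset.erase_eq_of_notMem hyC, hf.linked_image_iff,
      Finset.subset_insert_iff_of_notMem hyC]

end Series

section Gammoid

variable {α : Type} [DecidableEq α] {E : Finset α} {ℬ ℬ' : Finset α → Prop} {x y : α}

theorem isGammoidBases_iff_maximal : IsGammoidBases E ℬ ↔
    ∃ (V : Type) (Adj : V → V → Prop) (B₀ : Set V) (φ : α → V), Set.InjOn φ ↑E ∧
      ∀ B, ℬ B ↔ Maximal (fun D : Finset α => D ⊆ E ∧ Linked Adj B₀ (φ '' ↑D)) B := by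
  simp only [IsGammoidBases, maximal_iff]

theorem IsStrictGammoidBases.isGammoidBases (h : IsStrictGammoidBases E ℬ) :
    IsGammoidBases E ℬ := by
  obtain ⟨Adj, B₀, -, -, hℬ⟩ := h
  exact ⟨α, Adj, B₀, id, Set.injOn_id _, by simpa only [Set.image_id] using hℬ⟩

theorem IsGammoidBases.parallel (hM : IsGammoidBases E ℬ) (hx : x ∈ E) (hy : y ∉ E)
    (hℬ' : ∀ C, ℬ' C ↔ ℬ C ∨ ∃ B, ℬ B ∧ x ∈ B ∧ C = insert y (B.erase x)) :
    IsGammoidBases (insert y E) ℬ' := by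
  rw [isGammoidBases_iff_maximal] at hM ⊢
  obtain ⟨V, Adj, B₀, φ, hφ, hℬ⟩ := hM
  refine ⟨Option V, parallelAdj Adj (φ x), some '' B₀, parallelMap φ y, injOn_parallelMap hφ,
    fun C => ?_⟩
  rw [hℬ', maximal_parallel_iff hx hy (fun _ h => And.left h) (linked_parallel_iff hφ hx hy)]
  simp only [hℬ]

theorem IsGammoidBases.series (hM : IsGammoidBases E ℬ) (hx : x ∈ E) (hy : y ∉ E)
    (hℬ' : ∀ C, ℬ' C ↔ (∃ B, ℬ B ∧ C = insert y B) ∨ (∃ B, ℬ B ∧ x ∉ B ∧ C = insert x B)) :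
    IsGammoidBases (insert y E) ℬ' := by
  rw [isGammoidBases_iff_maximal] at hM ⊢
  obtain ⟨V, Adj, B₀, φ, hφ, hℬ⟩ := hM
  refine ⟨V ⊕ Bool, seriesAdj Adj (φ x), seriesTargets B₀, seriesMap φ x y, injOn_seriesMap hφ,
    fun C => ?_⟩
  rw [hℬ', maximal_series_iff (L := fun D => D ⊆ E ∧ Linked Adj B₀ (φ '' ↑D)) hx hy
    (fun _ h => h.1) (linked_series_iff hφ hx hy)]
  simp only [hℬ]

theorem IsGammoidBases.of_spStep {M M' : Finset α × (Finset α → Prop)}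
    (hM : IsGammoidBases M.1 M.2) (h : SPStep M M') : IsGammoidBases M'.1 M'.2 := by
  obtain ⟨x, hx, y, hy, hE, hseries | hparallel⟩ := h
  · exact hE ▸ hM.series hx hy hseries
  · exact hE ▸ hM.parallel hx hy hparallel

end Gammoid

/-- A series-parallel extension of a gammoid is a gammoid; in particular, a
parallel extension of a strict gammoid is a gammoid. -/
theorem stmt13 {α : Type} [DecidableEq α] :
    (∀ M M' : Finset α × (Finset α → Prop),
      IsGammoidBases M.1 M.2 → Relation.ReflTransGen SPStep M M' →
        IsGammoidBases M'.1 M'.2) ∧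
    (∀ (E E' : Finset α) (ℬ ℬ' : Finset α → Prop),
      IsStrictGammoidBases E ℬ →
      (∃ x ∈ E, ∃ y ∉ E, E' = insert y E ∧
        ∀ C, ℬ' C ↔ ℬ C ∨ (∃ B, ℬ B ∧ x ∈ B ∧ C = insert y (B.erase x))) →
      IsGammoidBases E' ℬ') := by
  refine ⟨fun M M' hM hMM' => ?_, fun E E' ℬ ℬ' hstrict hext => ?_⟩
  · induction hMM' with
    | refl => exact hM
    | tail _ hstep ih => exact ih.of_spStep hstep
  · obtain ⟨x, hx, y, hy, rfl, hℬ'⟩ := hext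
    exact hstrict.isGammoidBases.parallel hx hy hℬ'
end
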